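/- Let |ψ⟩ be a vector and Z₁,…,Z_{N−1} commuting self-adjoint involutions with spectral projections Z_i^{(±)} = (I ± Z_i)/2. Suppose ⟨ψ|Z_i^{(−)}|ψ⟩ = 1/N and ⟨ψ| (⊗_{l≠i} Z_l^{(+)}) Z_i^{(−)} |ψ⟩ = 1/N for each i. Then ⟨ψ|Z_i^{(−)} Z_j^{(−)}|ψ⟩ = 0 and hence Z_i^{(−)} Z_j^{(−)}|ψ⟩ = 0 for all i ≠ j. -/

import Mathlib

/-!
Fix `i ≠ j` and put `φ = Z_j^{(−)} ψ`. The product `P = ∏_{l ≠ j} Z_l^{(+)}` is an orthogonal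
projection commuting with `Z_j^{(−)}`, so both hypotheses say `⟪φ, P φ⟫ = 1/N = ⟪φ, φ⟫`; hence
`‖φ - P φ‖² = ⟪φ, φ⟫ - ⟪φ, P φ⟫ = 0` and `φ` lies in the range of `P`. As `Z_i^{(+)}` is a factor
of `P` and `Z_i^{(−)} Z_i^{(+)} = 0`, this gives `Z_i^{(−)} φ = Z_i^{(−)} P φ = 0`.
-/

open scoped InnerProductSpace

section Involution

variable {R A : Type*} [Field R] [Ring A] [Algebra R A] {u : A}

theorem isIdempotentElem_half_smul_one_add [NeZero (2 : R)] (hu : u * u = 1) :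
    IsIdempotentElem ((1 / 2 : R) • (1 + u)) := by
  have hsq : (1 + u) * (1 + u) = (2 : R) • (1 + u) := by
    simp only [add_mul, mul_add, one_mul, mul_one, hu]
    module
  rw [IsIdempotentElem, smul_mul_smul, hsq, smul_smul]
  congr 1
  field_simp

theorem isIdempotentElem_half_smul_one_sub [NeZero (2 : R)] (hu : u * u = 1) :
    IsIdempotentElem ((1 / 2 : R) • (1 - u)) := by
  simpa only [sub_eq_add_neg] using
    isIdempotentElem_half_smul_one_add (R := R) (u := -u) (by rw [neg_mul_neg, hu])

theorem half_smul_one_sub_mul_half_smul_one_add (hu : u * u = 1) :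
    (1 / 2 : R) • (1 - u) * (1 / 2 : R) • (1 + u) = 0 := by
  simp only [smul_mul_smul, sub_mul, mul_add, one_mul, mul_one, hu]
  module

theorem Commute.half_smul_one_sub_half_smul_one_add {v : A} (huv : Commute u v) :
    Commute ((1 / 2 : R) • (1 - u)) ((1 / 2 : R) • (1 + v)) :=
  ((Commute.one_left _).sub_left ((Commute.one_right u).add_right huv)).smul_left _
    |>.smul_right _

end Involution

namespace LinearMap

variable {𝕜 E : Type*} [RCLike 𝕜] [NormedAddCommGroup E] [InnerProductSpace 𝕜 E]

theorem IsSymmetricProjection.mul_of_commute {p q : E →ₗ[𝕜] E} (hp : p.IsSymmetricProjection)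
    (hq : q.IsSymmetricProjection) (hpq : Commute p q) : (p * q).IsSymmetricProjection :=
  ⟨hp.isIdempotentElem.mul_of_commute hpq hq.isIdempotentElem,
    hp.isSymmetric.mul_of_commute hq.isSymmetric hpq⟩

theorem IsSymmetricProjection.noncommProd {ι : Type*} (s : Finset ι) (p : ι → E →ₗ[𝕜] E)
    (comm) (hp : ∀ i ∈ s, (p i).IsSymmetricProjection) :
    (s.noncommProd p comm).IsSymmetricProjection := by
  induction s using Finset.cons_induction with
  | empty => exact ⟨IsIdempotentElem.one, IsSymmetric.one⟩
  | cons a s ha ih =>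
    rw [Finset.noncommProd_cons]
    refine (hp a (s.mem_cons_self a)).mul_of_commute
      (ih _ fun i hi ↦ hp i (Finset.mem_cons_of_mem hi)) ?_
    exact Finset.noncommProd_commute _ _ _ _ fun i hi ↦
      comm (s.mem_cons_self a) (Finset.mem_cons_of_mem hi) (ne_of_mem_of_not_mem hi ha).symm

theorem IsSymmetricProjection.half_smul_one_add {z : E →ₗ[𝕜] E} (hz : z.IsSymmetric)
    (hz2 : z * z = 1) : ((1 / 2 : 𝕜) • (1 + z)).IsSymmetricProjection :=
  ⟨isIdempotentElem_half_smul_one_add hz2, (IsSymmetric.one.add hz).smul (by simp [map_ofNat])⟩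

theorem IsSymmetricProjection.half_smul_one_sub {z : E →ₗ[𝕜] E} (hz : z.IsSymmetric)
    (hz2 : z * z = 1) : ((1 / 2 : 𝕜) • (1 - z)).IsSymmetricProjection :=
  ⟨isIdempotentElem_half_smul_one_sub hz2, (IsSymmetric.one.sub hz).smul (by simp [map_ofNat])⟩

theorem IsSymmetricProjection.apply_eq_self_of_inner_eq {p : E →ₗ[𝕜] E}
    (hp : p.IsSymmetricProjection) {x : E} (hx : ⟪x, p x⟫_𝕜 = ⟪x, x⟫_𝕜) : p x = x := by
  have hpx : ⟪p x, p x⟫_𝕜 = ⟪x, p x⟫_𝕜 := by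
    rw [hp.isSymmetric, ← Module.End.mul_apply, hp.isIdempotentElem.eq]
  have hxp : ⟪p x, x⟫_𝕜 = ⟪x, p x⟫_𝕜 := hp.isSymmetric x x
  have hdiff : ⟪x - p x, x - p x⟫_𝕜 = 0 := by
    rw [inner_sub_left, inner_sub_right, inner_sub_right, hpx, hxp, hx]
    ring
  exact (sub_eq_zero.mp (inner_self_eq_zero.mp hdiff)).symm

end LinearMap

theorem stmt14 {H : Type*} [NormedAddCommGroup H] [InnerProductSpace ℂ H]
    (N : ℕ) (ψ : H)
    (Z Zp Zm : Fin N → (H →ₗ[ℂ] H))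
    (hZ2 : ∀ i, Z i * Z i = 1)
    (hsa : ∀ i, ∀ x y : H, ⟪Z i x, y⟫_ℂ = ⟪x, Z i y⟫_ℂ)
    (hcomm : ∀ i j, Z i * Z j = Z j * Z i)
    (hZp : ∀ i, Zp i = (1/2 : ℂ) • ((1 : H →ₗ[ℂ] H) + Z i))
    (hZm : ∀ i, Zm i = (1/2 : ℂ) • ((1 : H →ₗ[ℂ] H) - Z i))
    (hPcomm : ∀ a b, Commute (Zp a) (Zp b))
    (h1 : ∀ i, ⟪ψ, Zm i ψ⟫_ℂ = (1 / N : ℂ))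
    (h2 : ∀ i : Fin N,
      ⟪ψ, ((Finset.univ.erase i).noncommProd Zp (fun a _ b _ _ => hPcomm a b))
          (Zm i ψ)⟫_ℂ = (1 / N : ℂ)) :
    ∀ i j, i ≠ j → ⟪ψ, Zm i (Zm j ψ)⟫_ℂ = 0 ∧ Zm i (Zm j ψ) = 0 := by
  intro i j hij
  set P := (Finset.univ.erase j).noncommProd Zp (fun a _ b _ _ => hPcomm a b)
  have hZmj : (Zm j).IsSymmetricProjection := hZm j ▸ .half_smul_one_sub (hsa j) (hZ2 j)
  have hP : P.IsSymmetricProjection := .noncommProd _ _ _ fun l _ ↦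
    hZp l ▸ .half_smul_one_add (hsa l) (hZ2 l)
  have hZmP : Commute (Zm j) P := Finset.noncommProd_commute _ _ _ _ fun l _ ↦ by
    rw [hZm j, hZp l]
    exact .half_smul_one_sub_half_smul_one_add (hcomm j l)
  have hfix : P (Zm j ψ) = Zm j ψ := hP.apply_eq_self_of_inner_eq <| by
    rw [hZmj.isSymmetric, hZmj.isSymmetric, ← Module.End.mul_apply (Zm j) P, hZmP.eq,
      Module.End.mul_apply, ← Module.End.mul_apply (Zm j) (Zm j), hZmj.isIdempotentElem.eq,
      h2 j, h1 j]
  have hkill : Zm i * P = 0 := by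
    rw [show P = Zp i * _ from (Finset.mul_noncommProd_erase _
        (Finset.mem_erase.mpr ⟨hij, Finset.mem_univ i⟩) _ _).symm,
      ← mul_assoc, hZm i, hZp i, half_smul_one_sub_mul_half_smul_one_add (hZ2 i), zero_mul]
  have hzero : Zm i (Zm j ψ) = 0 := by
    rw [← hfix, ← Module.End.mul_apply, hkill, LinearMap.zero_apply]
  exact ⟨by rw [hzero, inner_zero_right], hzero⟩
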